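/- Let α be a cascading n-sequence with lower-subinterval decomposition I_1, ..., I_P, and let l in {1, ..., n}. Suppose max(I_k) = l and applying f_{I_k} to R_{k-1} adds a box to column i of the l-th partition (via its final operator f_l). Then for every k' > k, applying f_{I_{k'}} to R_{k'-1} does not add any box to column i of the l-th partition. -/

import Mathlib

namespace CascRC

abbrev RP := Multiset (ℕ × ℤ)
abbrev RC := ℕ → RP

/-- The Cartan matrix of type `A`. -/
def cartanA (a b : ℕ) : ℤ :=
  if a = b then 2 else if b = a + 1 ∨ a = b + 1 then -1 else 0

/-- The smallest rigging of a rigged partition (0 if empty). -/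
noncomputable def minRig (ν : RP) : ℤ :=
  if h : ν = 0 then 0
  else (ν.map Prod.snd).toFinset.min'
    (Multiset.toFinset_nonempty.mpr (by simpa [Multiset.map_eq_zero] using h))

/-- The greatest length of a string whose rigging is the smallest rigging. -/
noncomputable def selLen (ν : RP) : ℕ :=
  ((ν.filter (fun s => s.2 = minRig ν)).map Prod.fst).sup

/-- The Kashiwara operator `f_a` on rigged configurations. -/
noncomputable def fOp (a : ℕ) (R : RC) : RC :=
  if R a = 0 ∨ 0 < minRig (R a) then
    fun b => (if b = a then ({(1, -1)} : RP) else 0)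
      + (R b).map (fun s => if 0 < s.1 then (s.1, s.2 - cartanA a b) else s)
  else
    fun b =>
      (if b = a then ({(selLen (R a) + 1, minRig (R a) - 1)} : RP) else 0)
      + ((if b = a then (R a).erase (selLen (R a), minRig (R a)) else R b).map
          (fun s => if selLen (R a) < s.1 then (s.1, s.2 - cartanA a b) else s))

/-- A list `γ` acts by `f_γ = f_{γ_p} ∘ ⋯ ∘ f_{γ₁}`. -/
noncomputable def fList (γ : List ℕ) (R : RC) : RC :=
  γ.foldl (fun S a => fOp a S) R

def emptyRC : RC := fun _ => 0

/-- `RC(α)`: the result of the list `α` acting on the empty rigged configuration. -/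
noncomputable def RCseq (α : List ℕ) : RC := fList α emptyRC

/-- The `m`-lower subinterval `(a, a+1, …, m)`. -/
def lowerInt (a m : ℕ) : List ℕ := List.range' a (m + 1 - a)

def IsLowerIv (n : ℕ) (p : ℕ × ℕ) : Prop := 1 ≤ p.1 ∧ p.1 ≤ p.2 ∧ p.2 ≤ n

/-- Ordering between consecutive lower subintervals in a cascading sequence. -/
def CascCh (p q : ℕ × ℕ) : Prop := q.2 < p.2 ∨ (q.2 = p.2 ∧ p.1 ≤ q.1)

/-- `ivs` is the lower-subinterval decomposition of a cascading `n`-sequence. -/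
def IsCascDecomp (n : ℕ) (ivs : List (ℕ × ℕ)) : Prop :=
  (∀ p ∈ ivs, IsLowerIv n p) ∧ ivs.Chain' CascCh

/-- The integer sequence determined by a decomposition into lower subintervals. -/
def seqOf (ivs : List (ℕ × ℕ)) : List ℕ :=
  (ivs.map (fun p => lowerInt p.1 p.2)).flatten

/-- `R_k`: the rigged configuration corresponding to `I_1 ⋯ I_k`. -/
noncomputable def Rk (ivs : List (ℕ × ℕ)) (k : ℕ) : RC :=
  RCseq (seqOf (ivs.take k))

/-- Height of column `c` of (the underlying partition of) a rigged partition. -/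
def colHt (ν : RP) (c : ℕ) : ℕ := (ν.filter (fun s => c ≤ s.1)).card

/-- Length of the `i`-th row (1-based) of the underlying partition. -/
def rowLen (ν : RP) (i : ℕ) : ℕ :=
  ((Finset.Icc 1 ((ν.map Prod.fst).sup)).filter (fun c => i ≤ colHt ν c)).card

/-- Length of the uppermost row of length at most `L` (0 for the virtual empty row). -/
def upRowLen (ν : RP) (L : ℕ) : ℕ := rowLen ν (colHt ν (L + 1) + 1)

/-- The column to which an application of `f_a` adds a box. -/
noncomputable def selCol (a : ℕ) (R : RC) : ℕ :=
  if R a = 0 ∨ 0 < minRig (R a) then 1 else selLen (R a) + 1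

/-- Given a lower subinterval `p = (a, m)` acting on `R`, the column to which the
operator `f_l` occurring in it adds a box in the `l`-th partition. -/
noncomputable def ivCol (p : ℕ × ℕ) (l : ℕ) (R : RC) : ℕ :=
  selCol l (fList (lowerInt p.1 (l - 1)) R)

/-- Lengths `|r_a|, |r_{a+1}|, …` of the rows `r_i` of Lemma "snake":
`rLenSeq R a (i - a) = |r_i|`. -/
def rLenSeq (R : RC) (a : ℕ) : ℕ → ℕ
  | 0 => rowLen (R a) 1
  | k + 1 => upRowLen (R (a + k + 1)) (rLenSeq R a k)



-- ===== auxiliary lemmas =====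


lemma minRig_le {ν : RP} {s : ℕ × ℤ} (hs : s ∈ ν) : minRig ν ≤ s.2 := by
  have hν : ν ≠ 0 := fun h => by simp [h] at hs
  rw [minRig, dif_neg hν]
  exact Finset.min'_le _ _ (by
    simp only [Multiset.mem_toFinset, Multiset.mem_map]
    exact ⟨s, hs, rfl⟩)

lemma exists_minRig {ν : RP} (hν : ν ≠ 0) : ∃ s ∈ ν, s.2 = minRig ν := by
  rw [minRig, dif_neg hν]
  have h := Finset.min'_mem (ν.map Prod.snd).toFinset
    (Multiset.toFinset_nonempty.mpr (by simpa [Multiset.map_eq_zero] using hν))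
  simp only [Multiset.mem_toFinset, Multiset.mem_map] at h
  obtain ⟨s, hs, h2⟩ := h
  exact ⟨s, hs, h2⟩

lemma le_minRig {ν : RP} (hν : ν ≠ 0) {c : ℤ} (hc : ∀ s ∈ ν, c ≤ s.2) : c ≤ minRig ν := by
  rw [minRig, dif_neg hν]
  refine Finset.le_min' _ _ _ ?_
  intro y hy
  simp only [Multiset.mem_toFinset, Multiset.mem_map] at hy
  obtain ⟨s, hs, rfl⟩ := hy
  exact hc s hs

lemma le_selLen {ν : RP} {s : ℕ × ℤ} (hs : s ∈ ν) (hm : s.2 = minRig ν) : s.1 ≤ selLen ν := by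
  refine Multiset.le_sup ?_
  simp only [Multiset.mem_map, Multiset.mem_filter]
  exact ⟨s, ⟨hs, hm⟩, rfl⟩

def AllPos (ν : RP) : Prop := ∀ s ∈ ν, 1 ≤ s.1
def QP (ν : RP) (i : ℕ) : Prop := ∀ s ∈ ν, s.1 < i → minRig ν < s.2
def PPp (ν : RP) (i : ℕ) : Prop := ∃ s ∈ ν, i ≤ s.1 ∧ s.2 = minRig ν
def Inv (ν : RP) (i : ℕ) : Prop := ν ≠ 0 ∧ minRig ν ≤ -1 ∧ AllPos ν ∧ QP ν i
def WInv (ν : RP) (i : ℕ) : Prop := ν ≠ 0 ∧ minRig ν ≤ 0 ∧ AllPos ν ∧ (QP ν i ∨ PPp ν i)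

lemma winv_of_inv {ν : RP} {i : ℕ} (h : Inv ν i) : WInv ν i :=
  ⟨h.1, h.2.1.trans (by norm_num), h.2.2.1, Or.inl h.2.2.2⟩

lemma cartanA_self (a : ℕ) : cartanA a a = 2 := by simp [cartanA]

lemma cartanA_far {a b : ℕ} (h1 : a ≠ b) (h2 : b ≠ a + 1) (h3 : a ≠ b + 1) :
    cartanA a b = 0 := by
  simp [cartanA, h1, h2, h3]

lemma cartanA_pred {l : ℕ} (hl : 1 ≤ l) : cartanA (l - 1) l = -1 := by
  unfold cartanA
  rw [if_neg (by omega), if_pos (by omega)]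

-- bump lemma
lemma bump_winv {ν : RP} {i : ℕ} (L : ℕ) (h : Inv ν i) :
    WInv (ν.map (fun s => if L < s.1 then (s.1, s.2 + 1) else s)) i := by
  obtain ⟨hne, hm, hpos, hQ⟩ := h
  set φ : ℕ × ℤ → ℕ × ℤ := fun s => if L < s.1 then (s.1, s.2 + 1) else s with hφ
  have hφ1 : ∀ s, (φ s).1 = s.1 := by intro s; simp only [hφ]; split <;> rfl
  have hφlo : ∀ s : ℕ × ℤ, s.2 ≤ (φ s).2 := by
    intro s; simp only [hφ]; split <;> simp
  have hφhi : ∀ s : ℕ × ℤ, (φ s).2 ≤ s.2 + 1 := by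
    intro s; simp only [hφ]; split <;> simp
  have hne' : ν.map φ ≠ 0 := by simpa [Multiset.map_eq_zero]
  obtain ⟨s0, hs0, hs0m⟩ := exists_minRig hne
  have hs0i : i ≤ s0.1 := by
    by_contra hlt
    exact absurd (hQ s0 hs0 (not_le.mp hlt)) (by simp [hs0m])
  have hub : minRig (ν.map φ) ≤ minRig ν + 1 := by
    calc minRig (ν.map φ) ≤ (φ s0).2 := minRig_le (Multiset.mem_map_of_mem φ hs0)
    _ ≤ s0.2 + 1 := hφhi s0
    _ = minRig ν + 1 := by rw [hs0m]
  refine ⟨hne', hub.trans (by linarith), ?_, Or.inr ?_⟩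
  · intro s hs
    obtain ⟨t, ht, rfl⟩ := Multiset.mem_map.mp hs
    rw [hφ1]; exact hpos t ht
  by_cases hcase : ∃ t ∈ ν, t.1 ≤ L ∧ t.2 = minRig ν
  · obtain ⟨t, ht, htL, htm⟩ := hcase
    have hφt : φ t = t := by simp [hφ, not_lt.mpr htL]
    have hge : minRig ν ≤ minRig (ν.map φ) := by
      refine le_minRig hne' ?_
      intro s' hs'
      obtain ⟨u, hu, rfl⟩ := Multiset.mem_map.mp hs'
      exact (minRig_le hu).trans (hφlo u)
    have hle : minRig (ν.map φ) ≤ minRig ν := by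
      have := minRig_le (Multiset.mem_map_of_mem φ ht)
      rwa [hφt, htm] at this
    have hti : i ≤ t.1 := by
      by_contra hlt
      exact absurd (hQ t ht (not_le.mp hlt)) (by simp [htm])
    refine ⟨φ t, Multiset.mem_map_of_mem φ ht, ?_, ?_⟩
    · rw [hφt]; exact hti
    · rw [hφt, htm]; exact le_antisymm hge hle
  · push_neg at hcase
    have hlb : ∀ s' ∈ ν.map φ, minRig ν + 1 ≤ s'.2 := by
      intro s' hs'
      obtain ⟨u, hu, rfl⟩ := Multiset.mem_map.mp hs'
      by_cases hL : L < u.1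
      · have : (φ u).2 = u.2 + 1 := by simp [hφ, hL]
        rw [this]
        linarith [minRig_le hu]
      · have h1 : u.2 ≠ minRig ν := hcase u hu (not_lt.mp hL)
        have h2 : minRig ν < u.2 := lt_of_le_of_ne (minRig_le hu) (Ne.symm h1)
        have : (φ u).2 = u.2 := by simp [hφ, hL]
        rw [this]; omega
    have hmeq : minRig (ν.map φ) = minRig ν + 1 := le_antisymm hub (le_minRig hne' hlb)
    have hL0 : L < s0.1 := by
      by_contra hh
      exact (hcase s0 hs0 (not_lt.mp hh)) hs0m
    refine ⟨φ s0, Multiset.mem_map_of_mem φ hs0, ?_, ?_⟩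
    · rw [hφ1]; exact hs0i
    · have : (φ s0).2 = s0.2 + 1 := by simp [hφ, hL0]
      rw [this, hs0m, hmeq]



lemma fOp_other {a b : ℕ} (hne : b ≠ a) (h0 : cartanA a b = 0) (R : RC) :
    fOp a R b = R b := by
  unfold fOp
  split <;> simp [hne, h0]

lemma fl_inv {R : RC} {l : ℕ} (h0 : ¬(R l = 0 ∨ 0 < minRig (R l))) (hpos : AllPos (R l)) :
    Inv (fOp l R l) (selLen (R l) + 1) ∧ selCol l R = selLen (R l) + 1 := by
  push_neg at h0
  obtain ⟨hne, hm⟩ := h0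
  have h0' : ¬(R l = 0 ∨ 0 < minRig (R l)) := by push_neg; exact ⟨hne, hm⟩
  have hdef : fOp l R l = ({(selLen (R l) + 1, minRig (R l) - 1)} : RP)
      + ((R l).erase (selLen (R l), minRig (R l))).map
          (fun s => if selLen (R l) < s.1 then (s.1, s.2 - 2) else s) := by
    unfold fOp
    rw [if_neg h0', if_pos rfl, if_pos rfl, cartanA_self]
  have hmem : ((selLen (R l) + 1, minRig (R l) - 1) : ℕ × ℤ) ∈ fOp l R l := by
    rw [hdef]; simp
  have hsub : ∀ s' ∈ fOp l R l,
      s' = (selLen (R l) + 1, minRig (R l) - 1) ∨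
      ∃ u ∈ R l, s' = (if selLen (R l) < u.1 then (u.1, u.2 - 2) else u) := by
    intro s' hs'
    rw [hdef] at hs'
    rcases Multiset.mem_add.mp hs' with h | h
    · exact Or.inl (Multiset.mem_singleton.mp h)
    · obtain ⟨u, hu, rfl⟩ := Multiset.mem_map.mp h
      exact Or.inr ⟨u, Multiset.mem_of_mem_erase hu, rfl⟩
  have hne' : fOp l R l ≠ 0 := fun h => by rw [h] at hmem; simp at hmem
  have hmin' : minRig (fOp l R l) ≤ minRig (R l) - 1 := minRig_le hmem
  refine ⟨⟨hne', by omega, ?_, ?_⟩, ?_⟩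
  · intro s' hs'
    rcases hsub s' hs' with rfl | ⟨u, hu, rfl⟩
    · simp
    · have := hpos u hu
      split <;> simpa
  · intro s' hs' hlt
    rcases hsub s' hs' with rfl | ⟨u, hu, rfl⟩
    · simp at hlt
    · have hmu := minRig_le hu
      by_cases hc : selLen (R l) < u.1
      · rw [if_pos hc] at hlt
        simp at hlt; omega
      · rw [if_neg hc]
        omega
  · unfold selCol
    rw [if_neg h0']

lemma step_fl {R : RC} {l i : ℕ} (h : WInv (R l) i) :
    i + 1 ≤ selCol l R ∧ Inv (fOp l R l) (selCol l R) := by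
  obtain ⟨hne, hm, hpos, hQP⟩ := h
  have h0 : ¬(R l = 0 ∨ 0 < minRig (R l)) := by push_neg; exact ⟨hne, hm⟩
  obtain ⟨hinv, hcol⟩ := fl_inv h0 hpos
  rw [hcol]
  refine ⟨?_, hinv⟩
  have hsel : i ≤ selLen (R l) := by
    rcases hQP with hQ | ⟨s, hs, hsi, hsm⟩
    · obtain ⟨s0, hs0, hs0m⟩ := exists_minRig hne
      have hi0 : i ≤ s0.1 := by
        by_contra hlt
        exact absurd (hQ s0 hs0 (not_le.mp hlt)) (by simp [hs0m])
      exact hi0.trans (le_selLen hs0 hs0m)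
    · exact hsi.trans (le_selLen hs hsm)
  omega

lemma base_fl {R : RC} {l : ℕ} (hpos : AllPos (R l)) :
    Inv (fOp l R l) (selCol l R) := by
  by_cases h0 : R l = 0 ∨ 0 < minRig (R l)
  · have hsel : selCol l R = 1 := by unfold selCol; rw [if_pos h0]
    rw [hsel]
    have hdef : fOp l R l = ({(1, -1)} : RP)
        + (R l).map (fun s => if 0 < s.1 then (s.1, s.2 - 2) else s) := by
      unfold fOp
      rw [if_pos h0, if_pos rfl, cartanA_self]
    have hmem : ((1, -1) : ℕ × ℤ) ∈ fOp l R l := by rw [hdef]; simp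
    have hne' : fOp l R l ≠ 0 := fun h => by rw [h] at hmem; simp at hmem
    have hposall : AllPos (fOp l R l) := by
      intro s' hs'
      rw [hdef] at hs'
      rcases Multiset.mem_add.mp hs' with h | h
      · rw [Multiset.mem_singleton.mp h]
      · obtain ⟨u, hu, rfl⟩ := Multiset.mem_map.mp h
        have := hpos u hu
        split <;> simpa
    refine ⟨hne', minRig_le hmem, hposall, ?_⟩
    intro s' hs' hlt
    exact absurd (hposall s' hs') (by omega)
  · obtain ⟨hinv, hcol⟩ := fl_inv h0 hpos
    rw [hcol]
    exact hinv

lemma fList_nil (R : RC) : fList [] R = R := rfl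

lemma fList_cons (b : ℕ) (γ : List ℕ) (R : RC) : fList (b :: γ) R = fList γ (fOp b R) := rfl

lemma fList_append (γ δ : List ℕ) (R : RC) : fList (γ ++ δ) R = fList δ (fList γ R) := by
  simp [fList, List.foldl_append]

lemma fList_other {l : ℕ} {γ : List ℕ} (hl : ∀ b ∈ γ, b + 2 ≤ l) (R : RC) :
    fList γ R l = R l := by
  induction γ generalizing R with
  | nil => rfl
  | cons b γ ih =>
    rw [fList_cons, ih (fun c hc => hl c (List.mem_cons_of_mem _ hc))]
    have hb : b + 2 ≤ l := hl b List.mem_cons_self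
    exact fOp_other (by omega) (cartanA_far (by omega) (by omega) (by omega)) R

lemma fOp_pred {R : RC} {l : ℕ} (hl : 1 ≤ l) :
    ∃ L : ℕ, fOp (l - 1) R l = (R l).map (fun s => if L < s.1 then (s.1, s.2 + 1) else s) := by
  have hne : l ≠ l - 1 := by omega
  have hc : cartanA (l - 1) l = -1 := cartanA_pred hl
  by_cases h0 : R (l - 1) = 0 ∨ 0 < minRig (R (l - 1))
  · refine ⟨0, ?_⟩
    unfold fOp
    rw [if_pos h0]
    simp [hne, hc, sub_neg_eq_add]
  · refine ⟨selLen (R (l - 1)), ?_⟩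
    unfold fOp
    rw [if_neg h0]
    simp [hne, hc, sub_neg_eq_add]

lemma lowerInt_concat {a m : ℕ} (ha : 1 ≤ a) (ham : a ≤ m) :
    lowerInt a m = lowerInt a (m - 1) ++ [m] := by
  unfold lowerInt
  have h1 : m + 1 - a = (m - a) + 1 := by omega
  have h2 : m - 1 + 1 - a = m - a := by omega
  rw [h1, h2]
  simpa [show a + (m - a) = m by omega] using List.range'_concat (step := 1) (s := a) (n := m - a)

lemma pre_l {R : RC} {a l i : ℕ} (ha : 1 ≤ a) (hal : a ≤ l) (h : Inv (R l) i) :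
    WInv ((fList (lowerInt a (l - 1)) R) l) i := by
  rcases eq_or_lt_of_le hal with rfl | hlt
  · have hnil : lowerInt a (a - 1) = [] := by
      unfold lowerInt
      rw [show a - 1 + 1 - a = 0 by omega]
      rfl
    rw [hnil, fList_nil]
    exact winv_of_inv h
  · have hl2 : 2 ≤ l := by omega
    have hdecomp : lowerInt a (l - 1) = lowerInt a (l - 1 - 1) ++ [l - 1] := by
      exact lowerInt_concat ha (by omega)
    rw [hdecomp, fList_append]
    set S := fList (lowerInt a (l - 1 - 1)) R with hS
    have hmid : S l = R l := by
      refine fList_other ?_ R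
      intro b hb
      unfold lowerInt at hb
      rw [List.mem_range'_1] at hb
      omega
    obtain ⟨L, hL⟩ := fOp_pred (R := S) (by omega : 1 ≤ l)
    have : fList [l - 1] S l = fOp (l - 1) S l := rfl
    rw [this, hL, hmid]
    exact bump_winv L h

-- AllPos preservation
def AllPosC (R : RC) : Prop := ∀ b, AllPos (R b)

lemma allPos_fOp (a : ℕ) {R : RC} (h : AllPosC R) : AllPosC (fOp a R) := by
  intro b s hs
  unfold fOp at hs
  split at hs
  · rcases Multiset.mem_add.mp hs with h1 | h1
    · split at h1
      · rw [Multiset.mem_singleton.mp h1]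
      · simp at h1
    · obtain ⟨u, hu, rfl⟩ := Multiset.mem_map.mp h1
      have := h b u hu
      split <;> simpa
  · rcases Multiset.mem_add.mp hs with h1 | h1
    · split at h1
      · rw [Multiset.mem_singleton.mp h1]; omega
      · simp at h1
    · obtain ⟨u, hu, rfl⟩ := Multiset.mem_map.mp h1
      have hu' : u ∈ R a ∨ u ∈ R b := by
        split at hu
        · exact Or.inl (Multiset.mem_of_mem_erase hu)
        · exact Or.inr hu
      have : 1 ≤ u.1 := by
        rcases hu' with h2 | h2
        · exact h a u h2
        · exact h b u h2
      split <;> simpa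

lemma allPos_fList (γ : List ℕ) {R : RC} (h : AllPosC R) : AllPosC (fList γ R) := by
  induction γ generalizing R with
  | nil => exact h
  | cons b γ ih => exact ih (allPos_fOp b h)

lemma allPos_RCseq (α : List ℕ) : AllPosC (RCseq α) := by
  refine allPos_fList α ?_
  intro b s hs
  simp [emptyRC] at hs

-- Rk lemmas
lemma seqOf_append (xs ys : List (ℕ × ℕ)) : seqOf (xs ++ ys) = seqOf xs ++ seqOf ys := by
  simp [seqOf]

lemma RCseq_append (α β : List ℕ) : RCseq (α ++ β) = fList β (RCseq α) := by
  simp [RCseq, fList_append]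

lemma Rk_succ (ivs : List (ℕ × ℕ)) (t : ℕ) (ht : t < ivs.length) :
    Rk ivs (t + 1) = fList (lowerInt (ivs[t].1) (ivs[t].2)) (Rk ivs t) := by
  unfold Rk
  rw [show ivs.take (t + 1) = ivs.take t ++ [ivs[t]] from by
    rw [List.take_succ, List.getElem?_eq_getElem ht]; rfl]
  rw [seqOf_append, RCseq_append]
  simp [seqOf]


/-- If the lower subinterval `I_{k+1}` (0-based `k`) has maximum `l` and its final
operator `f_l` adds a box to column `i` of the `l`-th partition, then no later lower
subinterval adds a box to column `i` of the `l`-th partition (for any later interval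
containing the letter `l`, its operator `f_l` adds a box to a different column). -/
theorem column_added_once (n : ℕ) (hn : 0 < n)
    (ivs : List (ℕ × ℕ)) (hc : IsCascDecomp n ivs)
    (l : ℕ) (k : ℕ) (hk : k < ivs.length)
    (hmax : (ivs[k]'hk).2 = l) (i : ℕ)
    (hi : ivCol (ivs[k]'hk) l (Rk ivs k) = i) :
    ∀ k', k < k' → ∀ hk' : k' < ivs.length,
      (ivs[k']'hk').1 ≤ l → l ≤ (ivs[k']'hk').2 →
      ivCol (ivs[k']'hk') l (Rk ivs k') ≠ i := by
  intro k' hkk' hk' ha' hl'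
  obtain ⟨hiv, hch⟩ := hc
  haveI : IsTrans (ℕ × ℕ) (fun p q => q.2 ≤ p.2) := ⟨fun a b c h1 h2 => le_trans h2 h1⟩
  have hpw : ivs.Pairwise (fun p q => q.2 ≤ p.2) := by
    rw [← List.isChain_iff_pairwise]
    exact hch.imp (fun {p q} h => h.elim le_of_lt (fun h => le_of_eq h.1))
  have hmono : ∀ t t' (ht : t < ivs.length) (ht' : t' < ivs.length), t ≤ t' →
      (ivs[t']'ht').2 ≤ (ivs[t]'ht).2 := by
    intro t t' ht ht' htt
    rcases eq_or_lt_of_le htt with rfl | h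
    · exact le_refl _
    · simpa using List.pairwise_iff_get.mp hpw ⟨t, ht⟩ ⟨t', ht'⟩ h
  have hmaxeq : ∀ t, k ≤ t → t ≤ k' → ∀ ht : t < ivs.length, (ivs[t]'ht).2 = l := by
    intro t h1 h2 ht
    have u1 := hmono k t hk ht h1
    have u2 := hmono t k' ht hk' h2
    omega
  have hlow : ∀ t (ht : t < ivs.length), 1 ≤ (ivs[t]'ht).1 ∧ (ivs[t]'ht).1 ≤ (ivs[t]'ht).2 := by
    intro t ht
    have h := hiv _ (ivs.getElem_mem ht)
    exact ⟨h.1, h.2.1⟩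
  have hsplitgen : ∀ t (ht : t < ivs.length), (ivs[t]'ht).2 = l → 1 ≤ (ivs[t]'ht).1 →
      (ivs[t]'ht).1 ≤ l →
      Rk ivs (t + 1) = fOp l (fList (lowerInt ((ivs[t]'ht).1) (l - 1)) (Rk ivs t)) := by
    intro t ht h2 h1a h1b
    rw [Rk_succ ivs t ht, h2, lowerInt_concat h1a h1b, fList_append]
    rfl
  have hstep : ∀ t (ht : t < ivs.length), (ivs[t]'ht).2 = l → ∀ c, Inv (Rk ivs t l) c →
      c + 1 ≤ ivCol (ivs[t]'ht) l (Rk ivs t) ∧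
        Inv (Rk ivs (t + 1) l) (ivCol (ivs[t]'ht) l (Rk ivs t)) := by
    intro t ht h2 c hInv
    have h1a := (hlow t ht).1
    have h1b : (ivs[t]'ht).1 ≤ l := le_of_le_of_eq (hlow t ht).2 h2
    have hW : WInv ((fList (lowerInt ((ivs[t]'ht).1) (l - 1)) (Rk ivs t)) l) c :=
      pre_l h1a h1b hInv
    obtain ⟨hcol, hinv'⟩ := step_fl hW
    refine ⟨hcol, ?_⟩
    rw [hsplitgen t ht h2 h1a h1b]
    exact hinv'
  have hbase : Inv (Rk ivs (k + 1) l) (ivCol (ivs[k]'hk) l (Rk ivs k)) := by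
    have h2 : (ivs[k]'hk).2 = l := hmax
    have h1a := (hlow k hk).1
    have h1b : (ivs[k]'hk).1 ≤ l := le_of_le_of_eq (hlow k hk).2 h2
    have hA : AllPosC (Rk ivs k) := allPos_RCseq _
    have hpos : AllPos ((fList (lowerInt ((ivs[k]'hk).1) (l - 1)) (Rk ivs k)) l) :=
      allPos_fList _ hA l
    have h := base_fl hpos
    rw [hsplitgen k hk h2 h1a h1b]
    exact h
  have main : ∀ t, k ≤ t → t ≤ k' → ∀ ht : t < ivs.length,
      Inv (Rk ivs (t + 1) l) (ivCol (ivs[t]'ht) l (Rk ivs t)) ∧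
      i ≤ ivCol (ivs[t]'ht) l (Rk ivs t) ∧
      (k < t → i < ivCol (ivs[t]'ht) l (Rk ivs t)) := by
    intro t hkt
    induction t, hkt using Nat.le_induction with
    | base =>
      intro _ ht
      exact ⟨hbase, le_of_eq hi.symm, fun h => absurd h (lt_irrefl k)⟩
    | succ t hkt ih =>
      intro ht1 htlen
      have htl : t < ivs.length := by omega
      obtain ⟨hInv, hle, _⟩ := ih (by omega) htl
      have h2 := hmaxeq (t + 1) (by omega) ht1 htlen
      obtain ⟨hcol, hinv'⟩ := hstep (t + 1) htlen h2 _ hInv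
      exact ⟨hinv', by omega, fun _ => by omega⟩
  obtain ⟨_, _, hlt⟩ := main k' (le_of_lt hkk') le_rfl hk'
  have := hlt hkk'
  omega


end CascRC
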